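/- If x is a fixed point of the PD3O iteration, i.e., there exist (p, q, x̄) with q = prox_{σf*}(q + σKx̄), p = prox_{τg}(p - τ∇h(p) - τKᵀq), and x̄ = 2p - p + τ∇h(p) - τ∇h(p) = p, then p satisfies the optimality condition 0 ∈ Kᵀ∂f(Kp) + ∂g(p) + ∇h(p), hence p minimizes f(Kx) + g(x) + h(x). -/

import Mathlib

open scoped RealInnerProductSpace

def IsSubgradientAt {E : Type*} [NormedAddCommGroup E] [InnerProductSpace ℝ E]
    (f : E → ℝ) (u x : E) : Prop :=
  ∀ y, f x + ⟪u, y - x⟫ ≤ f y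

theorem ConvexOn.add_fderiv_sub_le {E : Type*} [NormedAddCommGroup E] [NormedSpace ℝ E]
    {s : Set E} {h : E → ℝ} {L : E →L[ℝ] ℝ} {p y : E} (hh : ConvexOn ℝ s h)
    (hp : p ∈ s) (hy : y ∈ s) (hL : HasFDerivAt h L p) :
    h p + L (y - p) ≤ h y := by
  -- compare the slope of `h` along the segment `[p, y]` with its derivative at `p`
  set ℓ := AffineMap.lineMap (k := ℝ) p y
  have hline : HasDerivAt (h ∘ ℓ) (L (y - p)) 0 := by
    have hℓ : HasDerivAt ℓ (y - p) 0 := AffineMap.hasDerivAt_lineMap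
    rw [← AffineMap.lineMap_apply_zero (k := ℝ) p y] at hL
    exact hL.comp_hasDerivAt 0 hℓ
  have hslope := (hh.comp_affineMap ℓ).le_slope_of_hasDerivAt
    (by simpa [ℓ] using hp) (by simpa [ℓ] using hy) zero_lt_one hline
  simp only [slope_def_field, Function.comp_apply, ℓ, AffineMap.lineMap_apply_zero,
    AffineMap.lineMap_apply_one, sub_zero, div_one] at hslope
  linarith

section Subgradient

variable {E F : Type*} [NormedAddCommGroup E] [InnerProductSpace ℝ E]
  [NormedAddCommGroup F] [InnerProductSpace ℝ F]

theorem ConvexOn.isSubgradientAt_of_hasGradientAt [CompleteSpace E] {h : E → ℝ} {u p : E}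
    (hh : ConvexOn ℝ Set.univ h) (hu : HasGradientAt h u p) : IsSubgradientAt h u p :=
  fun y => by
    simpa using hh.add_fderiv_sub_le (Set.mem_univ p) (Set.mem_univ y) hu.hasFDerivAt

theorem IsSubgradientAt.comp_continuousLinearMap [CompleteSpace E] [CompleteSpace F]
    {f : F → ℝ} {q : F} {p : E} (K : E →L[ℝ] F) (hq : IsSubgradientAt f q (K p)) :
    IsSubgradientAt (fun x => f (K x)) (ContinuousLinearMap.adjoint K q) p := fun y => by
  simpa [ContinuousLinearMap.adjoint_inner_left] using hq (K y)

theorem IsSubgradientAt.add {f g : E → ℝ} {u v x : E} (hf : IsSubgradientAt f u x)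
    (hg : IsSubgradientAt g v x) : IsSubgradientAt (fun y => f y + g y) (u + v) x :=
  fun y => by
    rw [inner_add_left]
    linarith [hf y, hg y]

theorem isSubgradientAt_zero_iff {f : E → ℝ} {x : E} :
    IsSubgradientAt f 0 x ↔ ∀ y, f x ≤ f y := by
  simp [IsSubgradientAt]

end Subgradient

/-- The fixed-point equations of PD3O enter through their prox characterizations:
`x̄ = p`, `q ∈ ∂f(Kp)` and `-(∇h(p) + Kᵀq) ∈ ∂g(p)`. -/
theorem pd3o_fixed_point_is_minimizer_general (n m : ℕ)
    (K : EuclideanSpace ℝ (Fin n) →L[ℝ] EuclideanSpace ℝ (Fin m))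
    (f : EuclideanSpace ℝ (Fin m) → ℝ) (g h : EuclideanSpace ℝ (Fin n) → ℝ)
    (hh : ConvexOn ℝ Set.univ h)
    (h' : EuclideanSpace ℝ (Fin n) → EuclideanSpace ℝ (Fin n))
    (hgrad : ∀ x, HasGradientAt h (h' x) x)
    (p : EuclideanSpace ℝ (Fin n)) (q : EuclideanSpace ℝ (Fin m))
    (hq : IsSubgradientAt f q (K p))
    (hp : IsSubgradientAt g (-(h' p + (ContinuousLinearMap.adjoint K) q)) p) :
    ∀ x, f (K p) + g p + h p ≤ f (K x) + g x + h x := by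
  have hsum := ((hq.comp_continuousLinearMap K).add hp).add
    (hh.isSubgradientAt_of_hasGradientAt (hgrad p))
  rw [show ContinuousLinearMap.adjoint K q + -(h' p + ContinuousLinearMap.adjoint K q) + h' p = 0
    by abel] at hsum
  exact isSubgradientAt_zero_iff.mp hsum

/-- Fixed points of PD3O are minimizers. If `(p, q, x̄)` is a fixed point of
the PD3O iteration — via the prox characterizations this means `x̄ = p`,
`q ∈ ∂f(Kp)` (from `q = prox_{σf*}(q + σKx̄)`) and
`-(∇h(p) + Kᵀq) ∈ ∂g(p)` (from `p = prox_{τg}(p - τ∇h(p) - τKᵀq)`), so that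
`0 ∈ Kᵀ∂f(Kp) + ∂g(p) + ∇h(p)` — then `p` minimizes `f(Kx) + g(x) + h(x)`. -/
theorem pd3o_fixed_point_is_minimizer (n m : ℕ)
    (K : EuclideanSpace ℝ (Fin n) →L[ℝ] EuclideanSpace ℝ (Fin m))
    (f : EuclideanSpace ℝ (Fin m) → ℝ) (g h : EuclideanSpace ℝ (Fin n) → ℝ)
    (hf : ConvexOn ℝ Set.univ f) (hg : ConvexOn ℝ Set.univ g) (hh : ConvexOn ℝ Set.univ h)
    (h' : EuclideanSpace ℝ (Fin n) → EuclideanSpace ℝ (Fin n))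
    (hgrad : ∀ x, HasGradientAt h (h' x) x)
    (τ σ : ℝ) (hτ : 0 < τ) (hσ : 0 < σ)
    (p : EuclideanSpace ℝ (Fin n)) (q : EuclideanSpace ℝ (Fin m))
    (hq : IsSubgradientAt f q (K p))
    (hp : IsSubgradientAt g (-(h' p + (ContinuousLinearMap.adjoint K) q)) p) :
    ∀ x, f (K p) + g p + h p ≤ f (K x) + g x + h x :=
  pd3o_fixed_point_is_minimizer_general n m K f g h hh h' hgrad p q hq hp
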